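/- Fix c>0, t>0 and a real p≥1. Then the p-th moment of the radial process, given by the expression E R^p(t) = (λ/c) e^{−λt} ∫₀^{ct} r^{p+1} e^{(λ/c)√(c²t²−r²)} / √(c²t²−r²) dr + (ct)^p e^{−λt}, tends to 0 as λ→∞. -/

import Mathlib

/-!
Write `a = ct`, `κ = λ/c` and `s = √(a² - r²)`. Since `r² = (a - s)(a + s) ≤ 2a(a - s)` and
`x^q ≤ (q/k)^q e^{kx}`, with `k = κ/2` one gets `r^p e^{ks} ≤ (2ap/κ)^{p/2} e^{ka}`. The remaining
factor `r e^{ks}/s` is the derivative of `-e^{ks}/k`, so its integral is at most `e^{ka}/k`.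
Hence the absolutely continuous part of the moment is at most `2 (2ap/κ)^{p/2} → 0`, while the atom
contributes `a^p e^{-κa} → 0`.
-/

open MeasureTheory Real Filter Set

theorem rpow_le_div_rpow_mul_exp {x k q : ℝ} (hx : 0 ≤ x) (hk : 0 < k) (hq : 0 < q) :
    x ^ q ≤ (q / k) ^ q * exp (k * x) := by
  have hy : k * x / q ≤ exp (k * x / q) :=
    (le_add_of_nonneg_right zero_le_one).trans (add_one_le_exp _)
  calc x ^ q = (q / k * (k * x / q)) ^ q := by congr 1; field_simp
    _ = (q / k) ^ q * (k * x / q) ^ q := mul_rpow (by positivity) (by positivity)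
    _ ≤ (q / k) ^ q * exp (k * x / q) ^ q := by gcongr
    _ = (q / k) ^ q * exp (k * x) := by rw [← exp_mul]; field_simp

theorem rpow_mul_exp_sqrt_le {a r k p : ℝ} (hr : 0 ≤ r) (hra : r ≤ a) (hk : 0 < k)
    (hp : 0 < p) :
    r ^ p * exp (k * √(a ^ 2 - r ^ 2)) ≤ (a * p / k) ^ (p / 2) * exp (k * a) := by
  have ha : 0 ≤ a := hr.trans hra
  set s := √(a ^ 2 - r ^ 2)
  have hs : s ^ 2 = a ^ 2 - r ^ 2 := sq_sqrt (by nlinarith)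
  have hsa : s ≤ a := by nlinarith [sqrt_nonneg (a ^ 2 - r ^ 2)]
  have hr2 : r ^ 2 ≤ 2 * a * (a - s) := by nlinarith [sqrt_nonneg (a ^ 2 - r ^ 2)]
  have hrp : r ^ p ≤ (a * p / k) ^ (p / 2) * exp (k * (a - s)) :=
    calc r ^ p = (r ^ 2) ^ (p / 2) := by
          rw [← rpow_natCast, ← rpow_mul hr]; congr 1; ring
      _ ≤ (2 * a * (a - s)) ^ (p / 2) := by gcongr
      _ = (2 * a) ^ (p / 2) * (a - s) ^ (p / 2) := mul_rpow (by positivity) (sub_nonneg.2 hsa)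
      _ ≤ (2 * a) ^ (p / 2) * ((p / 2 / k) ^ (p / 2) * exp (k * (a - s))) := by
          gcongr
          exact rpow_le_div_rpow_mul_exp (sub_nonneg.2 hsa) hk (half_pos hp)
      _ = (a * p / k) ^ (p / 2) * exp (k * (a - s)) := by
          rw [← mul_assoc,
            ← mul_rpow (by positivity : (0 : ℝ) ≤ 2 * a) (by positivity : 0 ≤ p / 2 / k)]
          congr 2; field_simp
  calc r ^ p * exp (k * s) ≤ (a * p / k) ^ (p / 2) * exp (k * (a - s)) * exp (k * s) := by
        gcongr
    _ = (a * p / k) ^ (p / 2) * exp (k * a) := by rw [mul_assoc, ← exp_add]; ring_nf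

theorem hasDerivAt_exp_mul_sqrt_sq_sub_sq {a k r : ℝ} (hk : k ≠ 0) (hr : r ^ 2 < a ^ 2) :
    HasDerivAt (fun x => -exp (k * √(a ^ 2 - x ^ 2)) / k)
      (r * exp (k * √(a ^ 2 - r ^ 2)) / √(a ^ 2 - r ^ 2)) r := by
  have hpos : 0 < a ^ 2 - r ^ 2 := sub_pos.2 hr
  have hsqrt : HasDerivAt (fun x => √(a ^ 2 - x ^ 2)) (-(2 * r) / (2 * √(a ^ 2 - r ^ 2))) r := by
    simpa using ((hasDerivAt_pow 2 r).const_sub (a ^ 2)).sqrt hpos.ne'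
  refine ((hsqrt.const_mul k).exp.neg.div_const k).congr_deriv ?_
  have := (sqrt_pos.2 hpos).ne'
  field_simp

theorem integral_mul_exp_sqrt_div_sqrt {a k : ℝ} (ha : 0 ≤ a) (hk : k ≠ 0) :
    IntervalIntegrable (fun r => r * exp (k * √(a ^ 2 - r ^ 2)) / √(a ^ 2 - r ^ 2)) volume 0 a ∧
      ∫ r in (0 : ℝ)..a, r * exp (k * √(a ^ 2 - r ^ 2)) / √(a ^ 2 - r ^ 2) =
        (exp (k * a) - 1) / k := by
  have hcont : ContinuousOn (fun x => -exp (k * √(a ^ 2 - x ^ 2)) / k) (Icc 0 a) := by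
    fun_prop
  have hderiv : ∀ r ∈ Ioo 0 a, HasDerivAt (fun x => -exp (k * √(a ^ 2 - x ^ 2)) / k)
      (r * exp (k * √(a ^ 2 - r ^ 2)) / √(a ^ 2 - r ^ 2)) r := fun r hr =>
    hasDerivAt_exp_mul_sqrt_sq_sub_sq hk (pow_lt_pow_left₀ hr.2 hr.1.le two_ne_zero)
  have hint := (intervalIntegrable_iff_integrableOn_Ioc_of_le ha).2 <|
    intervalIntegral.integrableOn_deriv_of_nonneg hcont hderiv fun r hr => by
      have := hr.1.le; positivity
  refine ⟨hint, ?_⟩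
  rw [intervalIntegral.integral_eq_sub_of_hasDerivAt_of_le ha hcont hderiv hint]
  rw [sub_self, sqrt_zero, mul_zero, exp_zero, zero_pow two_ne_zero, sub_zero, sqrt_sq ha]
  ring

theorem mul_exp_mul_integral_rpow_le {a p κ : ℝ} (ha : 0 ≤ a) (hp : 0 < p) (hκ : 0 < κ) :
    κ * exp (-κ * a) *
        ∫ r in (0 : ℝ)..a, r ^ (p + 1) * exp (κ * √(a ^ 2 - r ^ 2)) / √(a ^ 2 - r ^ 2) ≤
      2 * (2 * a * p / κ) ^ (p / 2) := by
  set k := κ / 2 with hk_def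
  have hk : 0 < k := half_pos hκ
  set M := (a * p / k) ^ (p / 2)
  obtain ⟨hint, hval⟩ := integral_mul_exp_sqrt_div_sqrt ha hk.ne'
  have hpt : ∀ r ∈ Icc 0 a, r ^ (p + 1) * exp (κ * √(a ^ 2 - r ^ 2)) / √(a ^ 2 - r ^ 2) ≤
      M * exp (k * a) * (r * exp (k * √(a ^ 2 - r ^ 2)) / √(a ^ 2 - r ^ 2)) := by
    rintro r ⟨hr, hra⟩
    have hsplit : r ^ (p + 1) * exp (κ * √(a ^ 2 - r ^ 2)) / √(a ^ 2 - r ^ 2) =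
        r ^ p * exp (k * √(a ^ 2 - r ^ 2)) *
          (r * exp (k * √(a ^ 2 - r ^ 2)) / √(a ^ 2 - r ^ 2)) := by
      have hκk : κ * √(a ^ 2 - r ^ 2) = k * √(a ^ 2 - r ^ 2) + k * √(a ^ 2 - r ^ 2) := by
        rw [hk_def]; ring
      rw [rpow_add' hr (by positivity), rpow_one, hκk, exp_add]
      ring
    rw [hsplit]
    exact mul_le_mul_of_nonneg_right (rpow_mul_exp_sqrt_le hr hra hk hp) (by positivity)
  have hint' : IntervalIntegrable
      (fun r => r ^ (p + 1) * exp (κ * √(a ^ 2 - r ^ 2)) / √(a ^ 2 - r ^ 2)) volume 0 a := by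
    refine (hint.const_mul (M * exp (k * a))).mono_fun'
      (by fun_prop : Measurable _).aestronglyMeasurable ?_
    refine ae_restrict_of_forall_mem measurableSet_uIoc fun r hr => ?_
    rw [uIoc_of_le ha] at hr
    have := hr.1
    exact (norm_of_nonneg (by positivity)).trans_le (hpt r (Ioc_subset_Icc_self hr))
  calc κ * exp (-κ * a) *
        ∫ r in (0 : ℝ)..a, r ^ (p + 1) * exp (κ * √(a ^ 2 - r ^ 2)) / √(a ^ 2 - r ^ 2)
      ≤ κ * exp (-κ * a) * (M * exp (k * a) * ((exp (k * a) - 1) / k)) := by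
        rw [← hval, ← intervalIntegral.integral_const_mul (M * exp (k * a))]
        gcongr
        exact intervalIntegral.integral_mono_on ha hint' (hint.const_mul _) hpt
    _ ≤ κ * exp (-κ * a) * (M * exp (k * a) * (exp (k * a) / k)) := by
        gcongr
        linarith
    _ = κ / k * M * (exp (-κ * a) * exp (k * a) * exp (k * a)) := by
        field_simp
    _ = 2 * (2 * a * p / κ) ^ (p / 2) := by
        have hexp : exp (-κ * a) * exp (k * a) * exp (k * a) = 1 := by
          rw [← exp_add, ← exp_add, hk_def, ← exp_zero]
          ring_nf
        have hM : M = (2 * a * p / κ) ^ (p / 2) := by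
          simp only [M, hk_def]
          congr 1
          field_simp
        rw [hexp, hM, hk_def]
        field_simp

theorem tendsto_moment_atTop {a p : ℝ} (ha : 0 < a) (hp : 0 < p) :
    Tendsto (fun κ => κ * exp (-κ * a) *
        (∫ r in (0 : ℝ)..a, r ^ (p + 1) * exp (κ * √(a ^ 2 - r ^ 2)) / √(a ^ 2 - r ^ 2)) +
      a ^ p * exp (-κ * a)) atTop (nhds 0) := by
  have hbound : Tendsto (fun κ => 2 * (2 * a * p / κ) ^ (p / 2)) atTop (nhds 0) := by
    have := (((tendsto_const_nhds (x := 2 * a * p)).div_atTop tendsto_id).rpow_const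
      (Or.inr (half_pos hp).le)).const_mul 2
    simpa [zero_rpow (half_pos hp).ne'] using this
  have hintegral : Tendsto (fun κ => κ * exp (-κ * a) *
      ∫ r in (0 : ℝ)..a, r ^ (p + 1) * exp (κ * √(a ^ 2 - r ^ 2)) / √(a ^ 2 - r ^ 2))
      atTop (nhds 0) := by
    refine squeeze_zero' ?_ ?_ hbound
    · filter_upwards [eventually_gt_atTop 0] with κ hκ
      have : 0 ≤ ∫ r in (0 : ℝ)..a,
          r ^ (p + 1) * exp (κ * √(a ^ 2 - r ^ 2)) / √(a ^ 2 - r ^ 2) :=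
        intervalIntegral.integral_nonneg ha.le fun r hr => by have := hr.1; positivity
      positivity
    · filter_upwards [eventually_gt_atTop 0] with κ hκ
      exact mul_exp_mul_integral_rpow_le ha.le hp hκ
  have hatom : Tendsto (fun κ => a ^ p * exp (-κ * a)) atTop (nhds 0) := by
    have := (tendsto_exp_neg_atTop_nhds_zero.comp (tendsto_id.atTop_mul_const ha)).const_mul
      (a ^ p)
    simpa [Function.comp_def, neg_mul] using this
  simpa using hintegral.add hatom

theorem moment_tendsto_zero (c t p : ℝ) (hc : 0 < c) (ht : 0 < t) (hp : 1 ≤ p) :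
    Tendsto
      (fun lam : ℝ =>
        lam / c * Real.exp (-lam * t) *
          (∫ r in (0:ℝ)..(c * t),
            r ^ (p + 1) * Real.exp (lam / c * Real.sqrt (c ^ 2 * t ^ 2 - r ^ 2)) /
              Real.sqrt (c ^ 2 * t ^ 2 - r ^ 2))
        + (c * t) ^ p * Real.exp (-lam * t))
      atTop (nhds 0) := by
  have hκ : Tendsto (fun lam => lam / c) atTop atTop := tendsto_id.atTop_div_const hc
  convert (tendsto_moment_atTop (mul_pos hc ht) (by linarith : 0 < p)).comp hκ using 2 with lam
  have hexp : -(lam / c) * (c * t) = -lam * t := by field_simp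
  simp only [Function.comp_apply, hexp, mul_pow]
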